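/- Lazy modular reduction is correct: for any nonnegative integer x, letting x' = (x mod 2^{128}) ⊕ ((x div 2^{128}) ⋆ 4) ⊕ ((x div 2^{128}) ⋆ 2), we have x' mod (2^{127} + 2 + 1) = x mod (2^{127} + 2 + 1), where all operations are carry-less and + in the modulus denotes ordinary addition of powers of two (i.e., the modulus is the integer 2^{127} ⊕ 2 ⊕ 1). -/

import Mathlib

/-- Carry-less multiplication: `(a ⋆ b)ᵢ = ⨁ₖ a_{i-k} bₖ`. -/
def clmul : ℕ → ℕ → ℕ
  | 0, _ => 0
  | a + 1, b => (if (a + 1) % 2 = 1 then b else 0) ^^^ 2 * clmul ((a + 1) / 2) b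
termination_by a _ => a
decreasing_by simp_wf; omega

/-! With `p = 2^127 ⊕ 2 ⊕ 1` and `q = x div 2^128` we have `2 ⋆ p = 2^128 ⊕ 4 ⊕ 2`, so the
lazily reduced value is `x ⊕ (2q) ⋆ p`: it differs from `x` by a carry-less multiple of `p`.
Carry-less remainders are unique, because a nonzero multiple `m ⋆ p` has a bit at or above
the top bit of `p` while remainders lie below it; hence `clmod` does not see the difference. -/

theorem xor_two_pow_mul_div (x k : ℕ) : x ^^^ 2 ^ k * (x / 2 ^ k) = x % 2 ^ k := by
  refine Nat.eq_of_testBit_eq fun i => ?_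
  by_cases hi : k ≤ i
  · simp [Nat.testBit_two_pow_mul, Nat.testBit_mod_two_pow, Nat.testBit_div_two_pow, hi,
      Nat.not_lt.2 hi]
  · simp [Nat.testBit_two_pow_mul, Nat.testBit_mod_two_pow, hi, Nat.lt_of_not_le hi]

theorem two_mul_xor (a b : ℕ) : 2 * (a ^^^ b) = 2 * a ^^^ 2 * b := by
  simpa [Nat.shiftLeft_eq, mul_comm] using Nat.shiftLeft_xor_distrib (a := a) (b := b) (i := 1)

theorem two_pow_le_xor_of_lt {a b n : ℕ} (ha : 2 ^ n ≤ a) (hb : b < 2 ^ n) :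
    2 ^ n ≤ a ^^^ b := by
  by_contra! h
  have := Nat.xor_lt_two_pow h hb
  rw [xor_cancel_right] at this
  omega

theorem clmul_eq (a b : ℕ) :
    clmul a b = (if a % 2 = 1 then b else 0) ^^^ 2 * clmul (a / 2) b := by
  rcases a with _ | a
  · simp [clmul]
  · rw [clmul]

@[simp]
theorem clmul_zero_left (b : ℕ) : clmul 0 b = 0 := by
  simp [clmul]

@[simp]
theorem clmul_one_left (b : ℕ) : clmul 1 b = b := by
  simp [clmul_eq 1]

theorem clmul_xor_left (a b c : ℕ) : clmul (a ^^^ b) c = clmul a c ^^^ clmul b c := by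
  induction a using Nat.strong_induction_on generalizing b with
  | _ a ih =>
  rcases eq_or_ne a 0 with rfl | ha
  · simp
  have hbit : (if (a ^^^ b) % 2 = 1 then c else 0) =
      (if a % 2 = 1 then c else 0) ^^^ (if b % 2 = 1 then c else 0) := by
    rcases Nat.mod_two_eq_zero_or_one a with h | h <;>
      rcases Nat.mod_two_eq_zero_or_one b with h' | h' <;>
      simp [Nat.xor_mod_two_eq, Nat.add_mod, h, h']
  rw [clmul_eq, clmul_eq a, clmul_eq b, Nat.xor_div_two, ih _ (by omega), two_mul_xor, hbit]
  ac_rfl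

theorem clmul_xor_right (a b c : ℕ) : clmul a (b ^^^ c) = clmul a b ^^^ clmul a c := by
  induction a using Nat.strong_induction_on with
  | _ a ih =>
  rcases eq_or_ne a 0 with rfl | ha
  · simp
  rw [clmul_eq, clmul_eq a b, clmul_eq a c, ih _ (by omega), two_mul_xor]
  split
  · ac_rfl
  · rw [zero_xor, zero_xor, zero_xor]

theorem clmul_two_mul_left (a b : ℕ) : clmul (2 * a) b = 2 * clmul a b := by
  simp [clmul_eq (2 * a)]

theorem clmul_two_mul_right (a b : ℕ) : clmul a (2 * b) = 2 * clmul a b := by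
  induction a using Nat.strong_induction_on with
  | _ a ih =>
  rcases eq_or_ne a 0 with rfl | ha
  · simp
  rw [clmul_eq, clmul_eq a b, ih _ (by omega), two_mul_xor]
  split <;> simp

theorem clmul_one_right (a : ℕ) : clmul a 1 = a := by
  induction a using Nat.strong_induction_on with
  | _ a ih =>
  rcases eq_or_ne a 0 with rfl | ha
  · simp
  have hbit : (if a % 2 = 1 then 1 else 0) = a % 2 := by split <;> omega
  have hsplit : a % 2 ^^^ 2 * (a / 2) = a := by
    simpa using ((xor_eq_iff_left_eq ..).1 (xor_two_pow_mul_div a 1)).symm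
  rw [clmul_eq, ih _ (by omega), hbit, hsplit]

theorem clmul_two_pow_right (a k : ℕ) : clmul a (2 ^ k) = 2 ^ k * a := by
  induction k with
  | zero => simp [clmul_one_right]
  | succ k ih => rw [pow_succ', clmul_two_mul_right, ih, mul_assoc]

theorem two_pow_log2_le_clmul {a b : ℕ} (ha : a ≠ 0) (hb : b ≠ 0) :
    2 ^ b.log2 ≤ clmul a b := by
  induction a using Nat.strong_induction_on with
  | _ a ih =>
  rcases Nat.lt_or_ge a 2 with ha2 | ha2
  · obtain rfl : a = 1 := by omega
    simpa using Nat.log2_self_le hb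
  have hhalf : 2 ^ (b.log2 + 1) ≤ 2 * clmul (a / 2) b := by
    rw [pow_succ']
    exact Nat.mul_le_mul_left 2 (ih _ (by omega) (by omega))
  have hbit : (if a % 2 = 1 then b else 0) < 2 ^ (b.log2 + 1) := by
    split
    · exact Nat.lt_log2_self
    · positivity
  calc 2 ^ b.log2 ≤ 2 ^ (b.log2 + 1) := Nat.pow_le_pow_right (by norm_num) (by omega)
    _ ≤ 2 * clmul (a / 2) b ^^^ (if a % 2 = 1 then b else 0) := two_pow_le_xor_of_lt hhalf hbit
    _ = clmul a b := by rw [clmul_eq a, Nat.xor_comm]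

theorem eq_of_clmul_xor_eq {p u v r s : ℕ} (hp : p ≠ 0) (hr : r < 2 ^ p.log2)
    (hs : s < 2 ^ p.log2) (h : clmul u p ^^^ r = clmul v p ^^^ s) : r = s := by
  have hv : clmul v p = clmul u p ^^^ r ^^^ s := by rw [h, xor_cancel_right]
  have hdiff : clmul (u ^^^ v) p = r ^^^ s := by
    rw [clmul_xor_left, hv, xor_assoc, xor_cancel_left]
  by_cases huv : u ^^^ v = 0
  · rwa [huv, clmul_zero_left, eq_comm, xor_eq_zero_iff] at hdiff
  · exact absurd (two_pow_log2_le_clmul huv hp) (hdiff ▸ (Nat.xor_lt_two_pow hr hs).not_ge)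

theorem clmod_xor_clmul (cldiv clmod : ℕ → ℕ → ℕ)
    (hchar : ∀ a b : ℕ, b ≠ 0 →
      a = clmul (cldiv a b) b ^^^ clmod a b ∧ clmod a b < 2 ^ Nat.log2 b)
    {p : ℕ} (hp : p ≠ 0) (a k : ℕ) : clmod (a ^^^ clmul k p) p = clmod a p := by
  obtain ⟨ha, ha_lt⟩ := hchar a p hp
  obtain ⟨hak, hak_lt⟩ := hchar (a ^^^ clmul k p) p hp
  refine eq_of_clmul_xor_eq (u := cldiv (a ^^^ clmul k p) p) (v := cldiv a p ^^^ k)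
    hp hak_lt ha_lt ?_
  calc clmul (cldiv (a ^^^ clmul k p) p) p ^^^ clmod (a ^^^ clmul k p) p
      = a ^^^ clmul k p := hak.symm
    _ = clmul (cldiv a p) p ^^^ clmod a p ^^^ clmul k p := by rw [← ha]
    _ = clmul (cldiv a p ^^^ k) p ^^^ clmod a p := by rw [clmul_xor_left]; ac_rfl

/-- Lazy modular reduction is correct: reducing x to
x' = (x mod 2^128) ⊕ ((x div 2^128) ⋆ 4) ⊕ ((x div 2^128) ⋆ 2) preserves the
residue modulo 2^127 ⊕ 2 ⊕ 1. -/
theorem stmt14 (cldiv clmod : ℕ → ℕ → ℕ)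
    (hchar : ∀ a b : ℕ, b ≠ 0 →
      a = clmul (cldiv a b) b ^^^ clmod a b ∧ clmod a b < 2 ^ Nat.log2 b)
    (x : ℕ) :
    clmod ((x % 2 ^ 128) ^^^ clmul (x / 2 ^ 128) 4 ^^^ clmul (x / 2 ^ 128) 2)
        (2 ^ 127 ^^^ 2 ^^^ 1) =
      clmod x (2 ^ 127 ^^^ 2 ^^^ 1) := by
  have hp : (2 ^ 127 ^^^ 2 ^^^ 1 : ℕ) ≠ 0 := by decide
  have hlazy : 2 * (2 ^ 127 ^^^ 2 ^^^ 1 : ℕ) = 2 ^ 128 ^^^ 4 ^^^ 2 := by decide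
  have hfold (q : ℕ) :
      clmul (2 * q) (2 ^ 127 ^^^ 2 ^^^ 1) = 2 ^ 128 * q ^^^ clmul q 4 ^^^ clmul q 2 := by
    rw [clmul_two_mul_left, ← clmul_two_mul_right, hlazy, clmul_xor_right, clmul_xor_right,
      clmul_two_pow_right]
  rw [← clmod_xor_clmul cldiv clmod hchar hp x (2 * (x / 2 ^ 128)), hfold,
    ← xor_two_pow_mul_div x 128]
  ac_rfl
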